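/- Exact self-similar blow-up solution of the 3D Burgers equation: Let W̄ : ℝ³ → ℝ be defined by W̄(y) = B(y̌)^{−1/2} W₁d( B(y̌)^{3/2} y₁ ), where y̌ = (y₂,y₃) and B(y̌) = 1/(1 + y₂² + y₃²). Fix T ∈ ℝ and define v : ℝ³ × (−∞, T) → ℝ³ by v₁(x,t) = (T−t)^{1/2} W̄( x₁/(T−t)^{3/2}, x₂/(T−t)^{1/2}, x₃/(T−t)^{1/2} ) and v₂ = v₃ ≡ 0. Then v is C^∞ on ℝ³ × (−∞,T), solves the 3D Burgers equation ∂ₜv + (v·∇)v = 0 there, and satisfies ∂_{x₁}v₁(0, t) = −1/(T−t) for all t < T; in particular ∂_{x₁}v₁(0,t) → −∞ as t → T⁻, so v forms a gradient blow-up at the single space-time point (0, T). -/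

import Mathlib

noncomputable section

/-- Points of physical space `ℝ³`. -/
abbrev V3 : Type := Fin 3 → ℝ

/-- Spatial partial derivative `∂ⱼ f` of a scalar function of `(x, t) ∈ ℝ³ × ℝ`. -/
def pd (j : Fin 3) (f : V3 × ℝ → ℝ) (p : V3 × ℝ) : ℝ :=
  fderiv ℝ f p ((Pi.single j 1 : V3), (0 : ℝ))

/-- Time derivative `∂ₜ f` of a scalar function of `(x, t) ∈ ℝ³ × ℝ`. -/
def pt (f : V3 × ℝ → ℝ) (p : V3 × ℝ) : ℝ :=
  fderiv ℝ f p ((0 : V3), (1 : ℝ))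

/-- The stable self-similar profile of the 1D Burgers equation. -/
def W1d (y : ℝ) : ℝ :=
  (-y / 2 + Real.sqrt (1 / 27 + y ^ 2 / 4)) ^ ((1 : ℝ) / 3)
    - (y / 2 + Real.sqrt (1 / 27 + y ^ 2 / 4)) ^ ((1 : ℝ) / 3)

/-- `B(y̌) = 1/(1 + y₂² + y₃²)`. -/
def Bf (y : V3) : ℝ := 1 / (1 + y 1 ^ 2 + y 2 ^ 2)

/-- The explicit 3D self-similar Burgers profile
`W̄(y) = B(y̌)^{−1/2} W₁d(B(y̌)^{3/2} y₁)`. -/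
def Wbar (y : V3) : ℝ :=
  Bf y ^ (-(1 : ℝ) / 2) * W1d (Bf y ^ ((3 : ℝ) / 2) * y 0)

/-- The exact self-similar solution of 3D Burgers with blow-up time `T`:
`v₁(x,t) = (T−t)^{1/2} W̄(x₁/(T−t)^{3/2}, x₂/(T−t)^{1/2}, x₃/(T−t)^{1/2})`, `v₂ = v₃ = 0`. -/
def vBlow (T : ℝ) (p : V3 × ℝ) : V3 :=
  ![(T - p.2) ^ ((1 : ℝ) / 2) *
      Wbar ![p.1 0 / (T - p.2) ^ ((3 : ℝ) / 2),
            p.1 1 / (T - p.2) ^ ((1 : ℝ) / 2),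
            p.1 2 / (T - p.2) ^ ((1 : ℝ) / 2)],
    0, 0]

/-!
Write `g(a, c)` for Cardano's formula for the real root of `v³ + c v + a = 0`, so that
`W₁d = g(·, 1)`. For `c ≥ 0` the root is unique, which gives the scaling `g(λ³a, λ²c) = λ g(a, c)`,
hence `W̄(y) = g(y₁, 1 + y₂² + y₃²)` and `v₁(x, t) = g(x₁, T − t + x₂² + x₃²)`. Implicit
differentiation of the cubic gives `∂ₐg = −1/(3g² + c)` and `∂_c g = −g/(3g² + c)`, hence
`∂ₜv₁ = g/(3g² + c) = −v₁ ∂₁v₁`; at `x = 0` the root is `g = 0`, so `∂₁v₁(0, t) = −1/(T − t)`.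
-/

open Filter Topology
open scoped ContDiff

def cardano (p : ℝ × ℝ) : ℝ :=
  (-p.1 / 2 + Real.sqrt (p.2 ^ 3 / 27 + p.1 ^ 2 / 4)) ^ ((1 : ℝ) / 3)
    - (p.1 / 2 + Real.sqrt (p.2 ^ 3 / 27 + p.1 ^ 2 / 4)) ^ ((1 : ℝ) / 3)

lemma abs_div_two_le_sqrt_discr {a c : ℝ} (hc : 0 ≤ c) :
    |a| / 2 ≤ Real.sqrt (c ^ 3 / 27 + a ^ 2 / 4) := by
  calc |a| / 2 = Real.sqrt (a ^ 2 / 4) := by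
        rw [Real.sqrt_div' _ (by norm_num : (0:ℝ) ≤ 4), Real.sqrt_sq_eq_abs]; norm_num
    _ ≤ _ := Real.sqrt_le_sqrt (by linarith [pow_nonneg hc 3])

lemma abs_div_two_lt_sqrt_discr {a c : ℝ} (hc : 0 < c) :
    |a| / 2 < Real.sqrt (c ^ 3 / 27 + a ^ 2 / 4) := by
  calc |a| / 2 = Real.sqrt (a ^ 2 / 4) := by
        rw [Real.sqrt_div' _ (by norm_num : (0:ℝ) ≤ 4), Real.sqrt_sq_eq_abs]; norm_num
    _ < _ := Real.sqrt_lt_sqrt (by positivity) (by linarith [pow_pos hc 3])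

lemma cardano_pow_three_add_mul {a c : ℝ} (hc : 0 ≤ c) :
    cardano (a, c) ^ 3 + c * cardano (a, c) + a = 0 := by
  simp only [cardano]
  set s := Real.sqrt (c ^ 3 / 27 + a ^ 2 / 4)
  have hs : |a| / 2 ≤ s := abs_div_two_le_sqrt_discr hc
  have hP : 0 ≤ -a / 2 + s := by cases abs_cases a <;> linarith
  have hQ : 0 ≤ a / 2 + s := by cases abs_cases a <;> linarith
  have cube_cbrt : ∀ x : ℝ, 0 ≤ x → (x ^ ((1 : ℝ) / 3)) ^ 3 = x := fun x hx => by
    rw [← Real.rpow_natCast, ← Real.rpow_mul hx]; norm_num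
  have hPQ : (-a / 2 + s) ^ ((1 : ℝ) / 3) * (a / 2 + s) ^ ((1 : ℝ) / 3) = c / 3 := by
    have hs2 : s ^ 2 = c ^ 3 / 27 + a ^ 2 / 4 := Real.sq_sqrt (by positivity)
    rw [← Real.mul_rpow hP hQ, show (-a / 2 + s) * (a / 2 + s) = (c / 3) ^ 3 by
      linear_combination hs2, ← Real.rpow_natCast, ← Real.rpow_mul (by positivity)]
    norm_num
  have hP3 := cube_cbrt _ hP
  have hQ3 := cube_cbrt _ hQ
  set P := (-a / 2 + s) ^ ((1 : ℝ) / 3)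
  set Q := (a / 2 + s) ^ ((1 : ℝ) / 3)
  -- `(P - Q)³ = P³ - Q³ - 3 P Q (P - Q)` with `P³ - Q³ = -a` and `P Q = c / 3`.
  linear_combination hP3 - hQ3 - 3 * (P - Q) * hPQ

lemma strictMono_pow_three_add_mul {c : ℝ} (hc : 0 ≤ c) : StrictMono fun v : ℝ => v ^ 3 + c * v :=
  (Odd.strictMono_pow (by decide)).add_monotone fun _ _ h => mul_le_mul_of_nonneg_left h hc

lemma eq_cardano_of_pow_three_add_mul {a c v : ℝ} (hc : 0 ≤ c) (hv : v ^ 3 + c * v + a = 0) :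
    v = cardano (a, c) :=
  (strictMono_pow_three_add_mul hc).injective <| by
    linear_combination hv - cardano_pow_three_add_mul (a := a) hc

lemma cardano_zero_fst (c : ℝ) : cardano (0, c) = 0 := by
  simp [cardano]

lemma cardano_pow_mul (l : ℝ) {a c : ℝ} (hc : 0 ≤ c) :
    cardano (l ^ 3 * a, l ^ 2 * c) = l * cardano (a, c) :=
  (eq_cardano_of_pow_three_add_mul (by positivity) <| by
    linear_combination l ^ 3 * cardano_pow_three_add_mul (a := a) hc).symm

lemma contDiffAt_cardano {a c : ℝ} (hc : 0 < c) : ContDiffAt ℝ ω cardano (a, c) := by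
  have hs := abs_div_two_lt_sqrt_discr (a := a) hc
  have hsqrt : ContDiffAt ℝ ω (fun p : ℝ × ℝ => Real.sqrt (p.2 ^ 3 / 27 + p.1 ^ 2 / 4)) (a, c) :=
    (Real.contDiffAt_sqrt (by positivity)).comp _ (by fun_prop)
  refine ContDiffAt.sub ?_ ?_
  · exact ((contDiffAt_fst.neg.div_const 2).add hsqrt).rpow_const_of_ne
      (by cases abs_cases a <;> linarith)
  · exact ((contDiffAt_fst.div_const 2).add hsqrt).rpow_const_of_ne
      (by cases abs_cases a <;> linarith)

open ContinuousLinearMap in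
lemma hasFDerivAt_cardano {a c : ℝ} (hc : 0 < c) :
    HasFDerivAt cardano ((-(3 * cardano (a, c) ^ 2 + c)⁻¹) •
      (fst ℝ ℝ ℝ + cardano (a, c) • snd ℝ ℝ ℝ)) (a, c) := by
  have hL := ((contDiffAt_cardano (a := a) hc).differentiableAt (by simp)).hasFDerivAt
  have hcubic := ((hL.pow 3).add (hasFDerivAt_snd.mul hL)).add hasFDerivAt_fst
  have hzero :
      (fun p : ℝ × ℝ => cardano p ^ 3 + p.2 * cardano p + p.1) =ᶠ[𝓝 (a, c)] fun _ => 0 := by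
    filter_upwards [continuous_snd.isOpen_preimage _ isOpen_Ioi |>.mem_nhds hc] with p hp
    exact cardano_pow_three_add_mul (le_of_lt hp)
  have hsum := (hcubic.congr_of_eventuallyEq hzero.symm).unique (hasFDerivAt_const 0 _)
  have hD : 3 * cardano (a, c) ^ 2 + c ≠ 0 := by positivity
  refine hL.congr_fderiv (ContinuousLinearMap.ext fun v => ?_)
  have hv := DFunLike.congr_fun hsum v
  simp only [Nat.add_one_sub_one, nsmul_eq_mul, Nat.cast_ofNat, add_apply, smul_apply, smul_eq_mul,
    coe_snd', coe_fst', zero_apply, smul_add, neg_smul, neg_apply] at hv ⊢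
  field_simp
  linear_combination hv

lemma W1d_eq_cardano (z : ℝ) : W1d z = cardano (z, 1) := by
  simp only [W1d, cardano]
  norm_num

lemma sq_rpow_div_two {u : ℝ} (hu : 0 ≤ u) (r : ℝ) : (u ^ 2) ^ (r / 2) = u ^ r := by
  rw [← Real.rpow_natCast, ← Real.rpow_mul hu, Nat.cast_ofNat, mul_div_cancel₀ r two_ne_zero]

lemma Wbar_eq_cardano (y : V3) : Wbar y = cardano (y 0, 1 + y 1 ^ 2 + y 2 ^ 2) := by
  set ρ := Real.sqrt (1 + y 1 ^ 2 + y 2 ^ 2)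
  have hρ : 0 < ρ := Real.sqrt_pos.2 (by positivity)
  have hρ2 : ρ ^ 2 = 1 + y 1 ^ 2 + y 2 ^ 2 := Real.sq_sqrt (by positivity)
  have hB : Bf y = ρ⁻¹ ^ 2 := by rw [Bf, inv_pow, hρ2, one_div]
  calc Wbar y = ρ * cardano (ρ⁻¹ ^ 3 * y 0, 1) := by
        rw [Wbar, hB, sq_rpow_div_two (by positivity), sq_rpow_div_two (by positivity),
          Real.rpow_neg_one, inv_inv, W1d_eq_cardano, Real.rpow_ofNat]
    _ = cardano (ρ ^ 3 * (ρ⁻¹ ^ 3 * y 0), ρ ^ 2 * 1) := (cardano_pow_mul ρ zero_le_one).symm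
    _ = cardano (y 0, 1 + y 1 ^ 2 + y 2 ^ 2) := by
        rw [← mul_assoc, ← mul_pow, mul_inv_cancel₀ hρ.ne', one_pow, one_mul, mul_one, hρ2]

lemma vBlow_apply_zero {T : ℝ} {p : V3 × ℝ} (hp : p.2 < T) :
    vBlow T p 0 = cardano (p.1 0, T - p.2 + p.1 1 ^ 2 + p.1 2 ^ 2) := by
  set σ := Real.sqrt (T - p.2)
  have hσ : 0 < σ := Real.sqrt_pos.2 (sub_pos.2 hp)
  have hσ2 : σ ^ 2 = T - p.2 := Real.sq_sqrt (sub_pos.2 hp).le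
  calc vBlow T p 0 = σ * cardano (p.1 0 / σ ^ 3, 1 + (p.1 1 / σ) ^ 2 + (p.1 2 / σ) ^ 2) := by
        simp only [vBlow, ← hσ2, sq_rpow_div_two hσ.le, Real.rpow_one, Real.rpow_ofNat]
        rw [Wbar_eq_cardano]
        rfl
    _ = cardano (σ ^ 3 * (p.1 0 / σ ^ 3), σ ^ 2 * (1 + (p.1 1 / σ) ^ 2 + (p.1 2 / σ) ^ 2)) :=
        (cardano_pow_mul σ (by positivity)).symm
    _ = cardano (p.1 0, T - p.2 + p.1 1 ^ 2 + p.1 2 ^ 2) := by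
        congr 2
        · field_simp
        · rw [← hσ2]; field_simp

lemma vBlow_apply_one (T : ℝ) (p : V3 × ℝ) : vBlow T p 1 = 0 := rfl

lemma vBlow_apply_two (T : ℝ) (p : V3 × ℝ) : vBlow T p 2 = 0 := rfl

lemma vBlow_zero_eventuallyEq {T : ℝ} {p : V3 × ℝ} (hp : p.2 < T) :
    (fun q => vBlow T q 0) =ᶠ[𝓝 p] fun q => cardano (q.1 0, T - q.2 + q.1 1 ^ 2 + q.1 2 ^ 2) := by
  filter_upwards [(isOpen_lt continuous_snd continuous_const).mem_nhds hp] with q hq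
  exact vBlow_apply_zero hq

lemma contDiffAt_vBlow {T : ℝ} {p : V3 × ℝ} (hp : p.2 < T) : ContDiffAt ℝ ω (vBlow T) p := by
  have hc : 0 < T - p.2 + p.1 1 ^ 2 + p.1 2 ^ 2 := by
    nlinarith [sq_nonneg (p.1 1), sq_nonneg (p.1 2)]
  refine contDiffAt_pi.2 fun i => ?_
  match i with
  | 0 =>
    have hchar : ContDiffAt ℝ ω (fun q : V3 × ℝ => (q.1 0, T - q.2 + q.1 1 ^ 2 + q.1 2 ^ 2)) p := by
      fun_prop
    exact ((contDiffAt_cardano hc).comp (g := cardano) p hchar).congr_of_eventuallyEq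
      (vBlow_zero_eventuallyEq hp)
  | 1 => exact contDiffAt_const
  | 2 => exact contDiffAt_const

lemma fderiv_vBlow_zero {T : ℝ} {p : V3 × ℝ} (hp : p.2 < T) (w : V3 × ℝ) :
    fderiv ℝ (fun q => vBlow T q 0) p w =
      -(w.1 0 + vBlow T p 0 * (2 * p.1 1 * w.1 1 + 2 * p.1 2 * w.1 2 - w.2)) /
        (3 * vBlow T p 0 ^ 2 + (T - p.2 + p.1 1 ^ 2 + p.1 2 ^ 2)) := by
  have hc : 0 < T - p.2 + p.1 1 ^ 2 + p.1 2 ^ 2 := by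
    nlinarith [sq_nonneg (p.1 1), sq_nonneg (p.1 2)]
  have hcoord (i : Fin 3) : HasFDerivAt (fun q : V3 × ℝ => q.1 i) _ p :=
    ((ContinuousLinearMap.proj i).comp (ContinuousLinearMap.fst ℝ V3 ℝ)).hasFDerivAt
  have hchar : HasFDerivAt (fun q : V3 × ℝ => (q.1 0, T - q.2 + q.1 1 ^ 2 + q.1 2 ^ 2)) _ p :=
    (hcoord 0).prodMk ((((hasFDerivAt_snd (p := p)).const_sub T).add
      ((hcoord 1).pow 2)).add ((hcoord 2).pow 2))
  have hv : HasFDerivAt (fun q : V3 × ℝ => cardano (q.1 0, T - q.2 + q.1 1 ^ 2 + q.1 2 ^ 2)) _ p :=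
    (hasFDerivAt_cardano hc).comp (g := cardano) p hchar
  rw [(vBlow_zero_eventuallyEq hp).fderiv_eq, hv.fderiv, vBlow_apply_zero hp]
  simp only [smul_add, neg_smul, Nat.add_one_sub_one, pow_one, nsmul_eq_mul, Nat.cast_ofNat,
    ContinuousLinearMap.add_comp, ContinuousLinearMap.neg_comp, ContinuousLinearMap.smul_comp,
    ContinuousLinearMap.fst_comp_prod, ContinuousLinearMap.snd_comp_prod, smul_neg, neg_add_rev,
    neg_neg, add_apply, neg_apply, smul_apply, ContinuousLinearMap.comp_apply,
    ContinuousLinearMap.coe_fst', ContinuousLinearMap.proj_apply, smul_eq_mul,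
    ContinuousLinearMap.coe_snd']
  ring

lemma pt_vBlow_zero {T t : ℝ} (x : V3) (ht : t < T) :
    pt (fun p => vBlow T p 0) (x, t) =
      vBlow T (x, t) 0 / (3 * vBlow T (x, t) 0 ^ 2 + (T - t + x 1 ^ 2 + x 2 ^ 2)) := by
  simp [pt, fderiv_vBlow_zero (p := (x, t)) ht]

lemma pd_zero_vBlow_zero {T t : ℝ} (x : V3) (ht : t < T) :
    pd 0 (fun p => vBlow T p 0) (x, t) =
      -1 / (3 * vBlow T (x, t) 0 ^ 2 + (T - t + x 1 ^ 2 + x 2 ^ 2)) := by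
  simp [pd, fderiv_vBlow_zero (p := (x, t)) ht]

lemma burgers_vBlow {T t : ℝ} (x : V3) (ht : t < T) (i : Fin 3) :
    pt (fun p => vBlow T p i) (x, t)
      + ∑ j : Fin 3, vBlow T (x, t) j * pd j (fun p => vBlow T p i) (x, t) = 0 := by
  rw [Fin.sum_univ_three, vBlow_apply_one, vBlow_apply_two, zero_mul, zero_mul, add_zero, add_zero]
  match i with
  | 0 => rw [pt_vBlow_zero x ht, pd_zero_vBlow_zero x ht]; ring
  | 1 => simp [pt, pd, vBlow_apply_one]
  | 2 => simp [pt, pd, vBlow_apply_two]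

lemma pd_zero_vBlow_zero_origin {T t : ℝ} (ht : t < T) :
    pd 0 (fun p => vBlow T p 0) ((0 : V3), t) = -(1 / (T - t)) := by
  simp [pd_zero_vBlow_zero 0 ht, vBlow_apply_zero (p := ((0 : V3), t)) ht, cardano_zero_fst,
    neg_div]

lemma tendsto_neg_one_div_sub_nhdsLT (T : ℝ) :
    Tendsto (fun t => -(1 / (T - t))) (𝓝[<] T) atBot := by
  have hsub : Tendsto (fun t => T - t) (𝓝[<] T) (𝓝[>] 0) :=
    tendsto_nhdsWithin_of_tendsto_nhds_of_eventually_within _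
      (((continuous_sub_left T).tendsto' T 0 (sub_self T)).mono_left nhdsWithin_le_nhds)
      (eventually_nhdsWithin_of_forall fun _ ht => Set.mem_Ioi.2 (sub_pos.2 ht))
  simpa only [one_div, Function.comp_def] using
    tendsto_neg_atTop_atBot.comp (tendsto_inv_nhdsGT_zero.comp hsub)

/-- Exact self-similar blow-up solution of the 3D Burgers equation: `v` is smooth on
`ℝ³ × (−∞, T)`, solves `∂ₜv + (v·∇)v = 0` there, satisfies
`∂₁v₁(0,t) = −1/(T−t)`, and `∂₁v₁(0,t) → −∞` as `t → T⁻` (gradient blow-up at the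
single space-time point `(0, T)`). -/
theorem vBlow_selfsimilar_burgers_blowup (T : ℝ) :
    ContDiffOn ℝ (⊤ : ℕ∞) (vBlow T) (Set.univ ×ˢ Set.Iio T) ∧
    (∀ x : V3, ∀ t < T, ∀ i : Fin 3,
      pt (fun p => vBlow T p i) (x, t)
        + (∑ j : Fin 3, vBlow T (x, t) j * pd j (fun p => vBlow T p i) (x, t)) = 0) ∧
    (∀ t < T, pd 0 (fun p => vBlow T p 0) ((0 : V3), t) = -(1 / (T - t))) ∧
    Filter.Tendsto (fun t => pd 0 (fun p => vBlow T p 0) ((0 : V3), t))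
      (nhdsWithin T (Set.Iio T)) Filter.atBot :=
  ⟨fun _ hp => ((contDiffAt_vBlow hp.2).contDiffWithinAt).of_le le_top,
    fun x _ ht => burgers_vBlow x ht,
    fun _ ht => pd_zero_vBlow_zero_origin ht,
    (tendsto_neg_one_div_sub_nhdsLT T).congr'
      (eventually_nhdsWithin_of_forall fun _ ht => (pd_zero_vBlow_zero_origin ht).symm)⟩
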